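/- For 0 < q < p ≤ 1 and x ∈ [0,1), the series Σ_{k=0}^{∞} [n+k choose k]_{p,q} x^k p^{−kn} converges (absolutely) for every natural number n. -/

import Mathlib

open Filter Topology

noncomputable def pqInt (p q : ℝ) (n : ℕ) : ℝ := (p ^ n - q ^ n) / (p - q)

noncomputable def pqFact (p q : ℝ) (n : ℕ) : ℝ :=
  ∏ j ∈ Finset.range n, pqInt p q (j + 1)

noncomputable def pqBinom (p q : ℝ) (n k : ℕ) : ℝ :=
  pqFact p q n / (pqFact p q k * pqFact p q (n - k))

noncomputable def mkz (p q : ℝ) (n : ℕ) (f : ℝ → ℝ) (x : ℝ) : ℝ :=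
  if x = 1 then f 1 else
    (p ^ (n * (n + 1) / 2))⁻¹ *
      ∑' k : ℕ, pqBinom p q (n + k) k * x ^ k * (p ^ (k * n))⁻¹ *
        (∏ s ∈ Finset.range (n + 1), (p ^ s - q ^ s * x)) *
        f (p ^ n * pqInt p q k / pqInt p q (n + k))

noncomputable def supNorm (g : ℝ → ℝ) : ℝ :=
  sSup ((fun x => |g x|) '' Set.Icc (0 : ℝ) 1)

noncomputable def modCont (f : ℝ → ℝ) (δ : ℝ) : ℝ :=
  sSup ((fun p : ℝ × ℝ => |f p.1 - f p.2|) ''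
    {p : ℝ × ℝ | p.1 ∈ Set.Icc (0 : ℝ) 1 ∧ p.2 ∈ Set.Icc (0 : ℝ) 1 ∧ |p.1 - p.2| ≤ δ})

def StatLim (x : ℕ → ℝ) (L : ℝ) : Prop :=
  ∀ ε > 0, Filter.Tendsto
    (fun n => (((Finset.range (n + 1)).filter (fun k => ε ≤ |x k - L|)).card : ℝ) / (n : ℝ))
    Filter.atTop (nhds 0)

/-! With `r = q / p < 1`, `[m]_{p,q} = p ^ m (1 - r ^ m) / (p - q)`, so the ratio of consecutive
terms of the series is `x (1 - r ^ (n + k + 1)) / (1 - r ^ (k + 1))`, which tends to `x < 1`: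
the ratio test applies. -/

theorem summable_mul_pow_of_tendsto_norm_ratio_one {𝕜 : Type*} [NormedField 𝕜] [CompleteSpace 𝕜]
    {g : ℕ → 𝕜} (hg : ∀ᶠ k in atTop, g k ≠ 0)
    (hlim : Tendsto (fun k => ‖g (k + 1)‖ / ‖g k‖) atTop (𝓝 1)) {x : 𝕜} (hx : ‖x‖ < 1) :
    Summable fun k => g k * x ^ k := by
  rcases eq_or_ne x 0 with rfl | hx0
  · exact summable_of_ne_finset_zero (s := {0}) fun k hk => by
      simp [zero_pow (Finset.notMem_singleton.mp hk)]
  refine summable_of_ratio_test_tendsto_lt_one hx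
    (hg.mono fun k hk => mul_ne_zero hk (pow_ne_zero k hx0)) ?_
  have hratio : ∀ k, ‖x‖ * (‖g (k + 1)‖ / ‖g k‖) = ‖g (k + 1) * x ^ (k + 1)‖ / ‖g k * x ^ k‖ := by
    intro k
    rw [norm_mul, norm_mul, norm_pow, norm_pow, pow_succ, mul_comm (‖x‖ ^ k), ← mul_assoc,
      mul_div_mul_right _ _ (pow_ne_zero k (norm_ne_zero_iff.mpr hx0))]
    ring
  simpa only [mul_one] using (hlim.const_mul ‖x‖).congr hratio

section pqCalculus

variable {p q : ℝ}

theorem pqInt_pos (hq : 0 ≤ q) (hqp : q < p) {m : ℕ} (hm : m ≠ 0) : 0 < pqInt p q m :=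
  div_pos (sub_pos.mpr (pow_lt_pow_left₀ hqp hq hm)) (sub_pos.mpr hqp)

theorem pqFact_pos (hq : 0 ≤ q) (hqp : q < p) (m : ℕ) : 0 < pqFact p q m :=
  Finset.prod_pos fun _ _ => pqInt_pos hq hqp (Nat.succ_ne_zero _)

theorem pqFact_succ (p q : ℝ) (m : ℕ) : pqFact p q (m + 1) = pqFact p q m * pqInt p q (m + 1) :=
  Finset.prod_range_succ _ _

theorem pqBinom_pos (hq : 0 ≤ q) (hqp : q < p) (n k : ℕ) : 0 < pqBinom p q n k :=
  div_pos (pqFact_pos hq hqp _) (mul_pos (pqFact_pos hq hqp _) (pqFact_pos hq hqp _))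

theorem pqBinom_add_self (p q : ℝ) (n k : ℕ) :
    pqBinom p q (n + k) k = pqFact p q (n + k) / (pqFact p q k * pqFact p q n) := by
  rw [pqBinom, Nat.add_sub_cancel]

theorem pqBinom_add_self_succ (p q : ℝ) (n k : ℕ) :
    pqBinom p q (n + (k + 1)) (k + 1) =
      pqBinom p q (n + k) k * (pqInt p q (n + k + 1) / pqInt p q (k + 1)) := by
  rw [pqBinom_add_self, pqBinom_add_self, ← add_assoc, pqFact_succ, pqFact_succ]
  ring

theorem pqInt_add_div_pqInt (hp : p ≠ 0) (hpq : p ≠ q) (n k : ℕ) :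
    pqInt p q (n + k) / pqInt p q k =
      p ^ n * ((1 - (q / p) ^ n * (q / p) ^ k) / (1 - (q / p) ^ k)) := by
  have hfactor : ∀ m, p ^ m - q ^ m = p ^ m * (1 - (q / p) ^ m) := fun m => by
    rw [div_pow, mul_sub, mul_one, mul_div_cancel₀ _ (pow_ne_zero _ hp)]
  rw [pqInt, pqInt, div_div_div_cancel_right₀ (sub_ne_zero.mpr hpq), hfactor, hfactor, pow_add,
    pow_add (q / p), mul_assoc, mul_comm (p ^ n), mul_assoc, mul_div_mul_left _ _ (pow_ne_zero _ hp)]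
  ring

theorem tendsto_pqInt_add_div_pqInt (hqp : |q| < p) (n : ℕ) :
    Tendsto (fun k => pqInt p q (n + k) / pqInt p q k) atTop (𝓝 (p ^ n)) := by
  have hp : 0 < p := (abs_nonneg q).trans_lt hqp
  have hr : Tendsto (fun k => (q / p) ^ k) atTop (𝓝 0) :=
    tendsto_pow_atTop_nhds_zero_of_abs_lt_one (by rwa [abs_div, abs_of_pos hp, div_lt_one hp])
  have hlim : Tendsto (fun k => p ^ n * ((1 - (q / p) ^ n * (q / p) ^ k) / (1 - (q / p) ^ k)))
      atTop (𝓝 (p ^ n * ((1 - (q / p) ^ n * 0) / (1 - 0)))) :=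
    ((tendsto_const_nhds.sub (hr.const_mul _)).div (tendsto_const_nhds.sub hr)
      (by norm_num)).const_mul _
  simp only [mul_zero, sub_zero, div_one, mul_one] at hlim
  refine hlim.congr fun k => (pqInt_add_div_pqInt hp.ne' ?_ n k).symm
  exact (lt_of_le_of_lt (le_abs_self q) hqp).ne'

noncomputable def mkzCoeff (p q : ℝ) (n k : ℕ) : ℝ := pqBinom p q (n + k) k / p ^ (k * n)

theorem mkzCoeff_pos (hq : 0 ≤ q) (hqp : q < p) (n k : ℕ) : 0 < mkzCoeff p q n k :=
  div_pos (pqBinom_pos hq hqp _ _) (pow_pos (hq.trans_lt hqp) _)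

theorem mkzCoeff_succ_div (hq : 0 ≤ q) (hqp : q < p) (n k : ℕ) :
    mkzCoeff p q n (k + 1) / mkzCoeff p q n k =
      pqInt p q (n + (k + 1)) / pqInt p q (k + 1) / p ^ n := by
  have hp : p ≠ 0 := (hq.trans_lt hqp).ne'
  rw [mkzCoeff, mkzCoeff, pqBinom_add_self_succ, add_mul, one_mul, pow_add, ← add_assoc]
  field_simp [(pqBinom_pos hq hqp (n + k) k).ne', (pqInt_pos hq hqp k.succ_ne_zero).ne']

theorem tendsto_mkzCoeff_succ_div (hq : 0 ≤ q) (hqp : q < p) (n : ℕ) :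
    Tendsto (fun k => mkzCoeff p q n (k + 1) / mkzCoeff p q n k) atTop (𝓝 1) := by
  have h := ((tendsto_pqInt_add_div_pqInt (abs_of_nonneg hq ▸ hqp) n).comp
    (tendsto_add_atTop_nat 1)).div_const (p ^ n)
  rw [div_self (pow_ne_zero n (hq.trans_lt hqp).ne')] at h
  exact h.congr fun k => (mkzCoeff_succ_div hq hqp n k).symm

end pqCalculus

theorem mkz_series_summable_general (p q : ℝ) (hq : 0 < q) (hqp : q < p)
    (n : ℕ) (x : ℝ) (hx : x ∈ Set.Ico (0 : ℝ) 1) :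
    Summable (fun k : ℕ => pqBinom p q (n + k) k * x ^ k * (p ^ (k * n))⁻¹) := by
  have hpos := mkzCoeff_pos hq.le hqp n
  have hratio : Tendsto (fun k => ‖mkzCoeff p q n (k + 1)‖ / ‖mkzCoeff p q n k‖) atTop (𝓝 1) := by
    simpa only [Real.norm_of_nonneg (hpos _).le] using tendsto_mkzCoeff_succ_div hq.le hqp n
  have hx' : ‖x‖ < 1 := by rw [Real.norm_of_nonneg hx.1]; exact hx.2
  refine (summable_mul_pow_of_tendsto_norm_ratio_one
    (Eventually.of_forall fun k => (hpos k).ne') hratio hx').congr fun k => ?_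
  rw [mkzCoeff, div_eq_mul_inv]
  ring

theorem mkz_series_summable (p q : ℝ) (hq : 0 < q) (hqp : q < p) (hp : p ≤ 1)
    (n : ℕ) (x : ℝ) (hx : x ∈ Set.Ico (0 : ℝ) 1) :
    Summable (fun k : ℕ => pqBinom p q (n + k) k * x ^ k * (p ^ (k * n))⁻¹) :=
  mkz_series_summable_general p q hq hqp n x hx
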